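/- With y_i the cosine law function of x, at points where A = sin y_i sin x_j sin x_k ≠ 0, the partial derivative ∂y_i/∂x_i equals sin x_i / A, and ∂y_i/∂x_j = (sin x_i / A) · cos y_k. -/

import Mathlib

/-!
On `[0, π]` the cosine law reads `y = arccos (cosineLaw …)`, so each partial derivative of `y` is
`-1 / sin y` times the partial derivative of the cosine-law quotient. The quotient's derivative in
its first angle is `-sin x₁ / (sin x₂ sin x₃)`; in its second angle, after `sin² + cos² = 1`, it is
`-(cos x₃ + cos x₁ cos x₂) / (sin² x₂ sin x₃)`, whose numerator is `cos y₃ · sin x₁ sin x₂` by the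
cosine law for `y₃`.
-/

open Real Set Filter Topology

namespace CosineLaw

noncomputable def cosineLaw (a b c : ℝ) : ℝ := (cos a + cos b * cos c) / (sin b * sin c)

theorem hasDerivAt_of_cos_eq {f g : ℝ → ℝ} {g' a : ℝ}
    (hfg : ∀ᶠ t in 𝓝 a, f t ∈ Icc 0 π ∧ cos (f t) = g t) (hg : HasDerivAt g g' a)
    (hsin : sin (f a) ≠ 0) : HasDerivAt f (-g' / sin (f a)) a := by
  obtain ⟨hfa, hcos⟩ := hfg.self_of_nhds
  have hf_eq : f =ᶠ[𝓝 a] fun t => arccos (g t) := hfg.mono fun t ⟨ht, hc⟩ => by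
    simp only [← hc, arccos_cos ht.1 ht.2]
  have hsqrt : √(1 - g a ^ 2) = sin (f a) := by
    rw [← sin_arccos, ← hcos, arccos_cos hfa.1 hfa.2]
  have hsin_sq : sin (f a) ^ 2 = 1 - g a ^ 2 := by
    rw [← hcos]
    linarith [sin_sq_add_cos_sq (f a)]
  have hsin_sq_ne : 1 - g a ^ 2 ≠ 0 := hsin_sq ▸ pow_ne_zero 2 hsin
  have harccos := hasDerivAt_arccos (x := g a) (by rintro h; simp [h] at hsin_sq_ne)
    (by rintro h; simp [h] at hsin_sq_ne)
  rw [hsqrt] at harccos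
  exact ((harccos.comp a hg).congr_of_eventuallyEq hf_eq).congr_deriv (by ring)

theorem hasDerivAt_cosineLaw_left (a b c : ℝ) :
    HasDerivAt (fun t => cosineLaw t b c) (-sin a / (sin b * sin c)) a :=
  ((hasDerivAt_cos a).add_const (cos b * cos c)).div_const (sin b * sin c)

theorem hasDerivAt_cosineLaw_mid {a b c : ℝ} (hb : sin b ≠ 0) (hc : sin c ≠ 0) :
    HasDerivAt (fun t => cosineLaw a t c)
      (-(cos c + cos a * cos b) / (sin b ^ 2 * sin c)) b := by
  have hnum : HasDerivAt (fun t => cos a + cos t * cos c) (-sin b * cos c) b :=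
    ((hasDerivAt_cos b).mul_const _).const_add _
  have hden : HasDerivAt (fun t => sin t * sin c) (cos b * sin c) b :=
    (hasDerivAt_sin b).mul_const _
  refine (hnum.div hden (mul_ne_zero hb hc)).congr_deriv ?_
  field_simp
  linear_combination -cos c * sin_sq_add_cos_sq b

end CosineLaw

open CosineLaw

theorem cosine_law_partial_derivatives (x1 x2 x3 : ℝ)
    (hx1 : x1 ∈ Ioo 0 π)
    -- `y1fun` is `y₁` as a function of `x₁` with `x₂, x₃` fixed:
    (y1fun : ℝ → ℝ) (U : Set ℝ) (hU : U ∈ nhds x1)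
    (hy1 : ∀ t ∈ U, y1fun t ∈ Ioo 0 π ∧
      cos (y1fun t) = (cos t + cos x2 * cos x3) / (sin x2 * sin x3))
    -- `z1fun` is `y₁` as a function of `x₂` with `x₁, x₃` fixed:
    (z1fun : ℝ → ℝ) (V : Set ℝ) (hV : V ∈ nhds x2)
    (hz1 : ∀ t ∈ V, z1fun t ∈ Ioo 0 π ∧
      cos (z1fun t) = (cos x1 + cos t * cos x3) / (sin t * sin x3))
    -- `y₃` at the given point:
    (y3 : ℝ)
    (hy3 : cos y3 = (cos x3 + cos x1 * cos x2) / (sin x1 * sin x2))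
    (A : ℝ) (hA : A = sin (y1fun x1) * sin x2 * sin x3) (hAne : A ≠ 0) :
    HasDerivAt y1fun (sin x1 / A) x1 ∧
    HasDerivAt z1fun (sin x1 / A * cos y3) x2 := by
  have hs1 : sin x1 ≠ 0 := (sin_pos_of_pos_of_lt_pi hx1.1 hx1.2).ne'
  obtain ⟨⟨hsy, hs2⟩, hs3⟩ : (sin (y1fun x1) ≠ 0 ∧ sin x2 ≠ 0) ∧ sin x3 ≠ 0 := by
    simpa [hA] using hAne
  have hy1' : ∀ᶠ t in 𝓝 x1, y1fun t ∈ Icc 0 π ∧ cos (y1fun t) = cosineLaw t x2 x3 :=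
    eventually_of_mem hU fun t ht => ⟨Ioo_subset_Icc_self (hy1 t ht).1, (hy1 t ht).2⟩
  have hz1' : ∀ᶠ t in 𝓝 x2, z1fun t ∈ Icc 0 π ∧ cos (z1fun t) = cosineLaw x1 t x3 :=
    eventually_of_mem hV fun t ht => ⟨Ioo_subset_Icc_self (hz1 t ht).1, (hz1 t ht).2⟩
  have hz_eq : z1fun x2 = y1fun x1 :=
    injOn_cos hz1'.self_of_nhds.1 hy1'.self_of_nhds.1
      (hz1'.self_of_nhds.2.trans hy1'.self_of_nhds.2.symm)
  constructor
  · convert hasDerivAt_of_cos_eq hy1' (hasDerivAt_cosineLaw_left x1 x2 x3) hsy using 1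
    rw [hA]
    field_simp
  · convert hasDerivAt_of_cos_eq hz1' (hasDerivAt_cosineLaw_mid hs2 hs3) (hz_eq ▸ hsy) using 1
    rw [hA, hy3, hz_eq]
    field_simp
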